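/- Under the null hypothesis of mutual independence of the components of X and the MCAR mechanism, for each pair k ≠ l the expected value of the squared pairwise Kendall statistic equals E(τ̃_kl^2) = (4/(n(n−1))) q_k^2 q_l^2 ((n−2) q_k q_l / 9 + 1/2). -/

import Mathlib

open MeasureTheory ProbabilityTheory Filter Finset

namespace KendallMissing

/-- Setup: `X i k` is the `k`-th component of the `i`-th observation, `R i k` the
corresponding response (missingness) indicator with `P(R i k = 1) = q k` (MCAR,
Bernoulli, independent across cells and of the data).  Under the null hypothesis `H₀`
of total (mutual) independence of the components, together with the i.i.d. sampling,
the whole family `{X i k} ∪ {R i k}` is mutually independent, the `X i k` are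
identically distributed in `i`, and the marginals are continuous (atomless). -/
structure Setup {Ω : Type*} [MeasurableSpace Ω] (μ : Measure Ω)
    (X R : ℕ → ℕ → Ω → ℝ) (q : ℕ → ℝ) : Prop where
  isProb : IsProbabilityMeasure μ
  measX : ∀ i k, Measurable (X i k)
  measR : ∀ i k, Measurable (R i k)
  indep : iIndepFun
      (fun (p : (ℕ × ℕ) × Bool) => if p.2 then R p.1.1 p.1.2 else X p.1.1 p.1.2) μ
  identX : ∀ i k, μ.map (X i k) = μ.map (X 0 k)
  contX : ∀ i k (x : ℝ), μ {ω | X i k ω = x} = 0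
  Rval : ∀ i k ω, R i k ω = 0 ∨ R i k ω = 1
  Rq : ∀ i k, μ {ω | R i k ω = 1} = ENNReal.ofReal (q k)
  q_nonneg : ∀ k, 0 ≤ q k
  q_le_one : ∀ k, q k ≤ 1

variable {Ω : Type*} [MeasurableSpace Ω]

/-- Expectation of a real random variable. -/
noncomputable def mean (μ : Measure Ω) (f : Ω → ℝ) : ℝ := ∫ ω, f ω ∂μ

/-- Variance of a real random variable. -/
noncomputable def var (μ : Measure Ω) (f : Ω → ℝ) : ℝ :=
  ∫ ω, (f ω - mean μ f) ^ 2 ∂μ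

/-- Covariance of two real random variables. -/
noncomputable def cov (μ : Measure Ω) (f g : Ω → ℝ) : ℝ :=
  ∫ ω, (f ω - mean μ f) * (g ω - mean μ g) ∂μ

/-- Completeness indicator `S i = ∏_{k<d} R i k` of the `i`-th observation. -/
noncomputable def Scomp (R : ℕ → ℕ → Ω → ℝ) (d i : ℕ) (ω : Ω) : ℝ :=
  ∏ k ∈ range d, R i k ω

/-- Complete-case Kendall tau `τ_kl^cc`. -/
noncomputable def tauCC (X R : ℕ → ℕ → Ω → ℝ) (n d k l : ℕ) (ω : Ω) : ℝ :=
  2 / ((n : ℝ) * ((n : ℝ) - 1)) *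
    ∑ i ∈ range n, ∑ j ∈ range i,
      Real.sign (X i k ω - X j k ω) * Real.sign (X i l ω - X j l ω) *
        (Scomp R d i ω * Scomp R d j ω)

/-- Complete-case test statistic `T_nd^cc = Σ_{l<k<d} (τ_kl^cc)²`. -/
noncomputable def TCC (X R : ℕ → ℕ → Ω → ℝ) (n d : ℕ) (ω : Ω) : ℝ :=
  ∑ k ∈ range d, ∑ l ∈ range k, (tauCC X R n d k l ω) ^ 2

/-- Pairwise (cell-wise) Kendall tau `τ̃_kl`. -/
noncomputable def tauP (X R : ℕ → ℕ → Ω → ℝ) (n k l : ℕ) (ω : Ω) : ℝ :=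
  2 / ((n : ℝ) * ((n : ℝ) - 1)) *
    ∑ i ∈ range n, ∑ j ∈ range i,
      Real.sign (X i k ω - X j k ω) * Real.sign (X i l ω - X j l ω) *
        (R i k ω * R j k ω * R i l ω * R j l ω)

/-- Pairwise test statistic `T̃_nd = Σ_{l<k<d} τ̃_kl²`. -/
noncomputable def Ttilde (X R : ℕ → ℕ → Ω → ℝ) (n d : ℕ) (ω : Ω) : ℝ :=
  ∑ k ∈ range d, ∑ l ∈ range k, (tauP X R n k l ω) ^ 2

/-- The kernel `f_k(i,j) = sgn(X_ik - X_jk) R_ik R_jk`. -/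
noncomputable def fker (X R : ℕ → ℕ → Ω → ℝ) (k i j : ℕ) (ω : Ω) : ℝ :=
  Real.sign (X i k ω - X j k ω) * (R i k ω * R j k ω)

/-- The `U`-statistic
`U_kl = (n(n-1)(n-2)(n-3))⁻¹ Σ_{i₁≠i₂≠i₃≠i₄} f_k(i₁,i₂) f_l(i₁,i₂) f_k(i₃,i₄) f_l(i₃,i₄)`,
the sum being over quadruples of pairwise distinct indices. -/
noncomputable def Ustat (X R : ℕ → ℕ → Ω → ℝ) (n k l : ℕ) (ω : Ω) : ℝ :=
  (1 / ((n : ℝ) * ((n : ℝ) - 1) * ((n : ℝ) - 2) * ((n : ℝ) - 3))) *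
    ∑ i1 ∈ range n, ∑ i2 ∈ range n, ∑ i3 ∈ range n, ∑ i4 ∈ range n,
      if i1 ≠ i2 ∧ i1 ≠ i3 ∧ i1 ≠ i4 ∧ i2 ≠ i3 ∧ i2 ≠ i4 ∧ i3 ≠ i4 then
        fker X R k i1 i2 ω * fker X R l i1 i2 ω * fker X R k i3 i4 ω * fker X R l i3 i4 ω
      else 0

/-- The `U`-statistic based test statistic `T̂_nd = Σ_{l<k<d} U_kl`. -/
noncomputable def That (X R : ℕ → ℕ → Ω → ℝ) (n d : ℕ) (ω : Ω) : ℝ :=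
  ∑ k ∈ range d, ∑ l ∈ range k, Ustat X R n k l ω

/-- The martingale-difference summands `Y_{n,k} = (2/√Var(T̂_nd)) Σ_{l<k} U_kl`. -/
noncomputable def Y (μ : Measure Ω) (X R : ℕ → ℕ → Ω → ℝ) (n d k : ℕ) (ω : Ω) : ℝ :=
  (2 / Real.sqrt (var μ (That X R n d))) * ∑ l ∈ range k, Ustat X R n k l ω

/-- The σ-field `F_{m,t} = σ{(X i j, R i j) : i < m, j < t}` (0-indexed). -/
def Fsig (X R : ℕ → ℕ → Ω → ℝ) (m t : ℕ) : MeasurableSpace Ω :=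
  ⨆ i ∈ Finset.range m, ⨆ j ∈ Finset.range t,
    (MeasurableSpace.comap (X i j) inferInstance ⊔ MeasurableSpace.comap (R i j) inferInstance)

end KendallMissing

/-!
Write `τ̃_kl` as `2 / (n (n - 1))` times the sum over pairs `j < i` of
`f_k(i,j) f_l(i,j)`, where `f_m(i,j) = sgn(X_im - X_jm) R_im R_jm`. Columns `k` and `l` are
independent, so the expectation of a product of two such terms splits into one factor per
column. Within a column, a pair against itself gives `q²` (ties are null), two pairs sharing
exactly one index give `± q³/3`, and disjoint pairs give `0`. The `1/3` holds because the three
rotations of `sgn(x - y) sgn(x - z)` have the same expectation under an i.i.d. law and sum to `1`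
off the ties. Each of the `n (n - 1) / 2` pairs meets `2 (n - 2)` others in exactly one index.
-/

namespace KendallMissing

@[fun_prop]
lemma measurable_real_sign : Measurable Real.sign :=
  Measurable.ite measurableSet_Iio measurable_const <|
    Measurable.ite measurableSet_Ioi measurable_const measurable_const

lemma sign_mul_sign_cyclic_sum_eq_one {x y z : ℝ} (hxy : x ≠ y) (hxz : x ≠ z) (hyz : y ≠ z) :
    Real.sign (x - y) * Real.sign (x - z) + Real.sign (y - z) * Real.sign (y - x)
      + Real.sign (z - x) * Real.sign (z - y) = 1 := by
  rcases hxy.lt_or_gt with h₁ | h₁ <;> rcases hxz.lt_or_gt with h₂ | h₂ <;>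
    rcases hyz.lt_or_gt with h₃ | h₃ <;>
    simp only [Real.sign_of_pos, Real.sign_of_neg, sub_pos, sub_neg, *] <;>
    first | (exfalso; linarith) | norm_num

lemma abs_real_sign_le_one (x : ℝ) : |Real.sign x| ≤ 1 := by
  rcases Real.sign_apply_eq x with h | h | h <;> simp [h]

lemma prod_self_diagonal_eq_zero {ν : Measure ℝ} [SFinite ν] [NullSingletonClass ν] :
    (ν.prod ν) {p : ℝ × ℝ | p.1 = p.2} = 0 := by
  rw [Measure.prod_apply (measurableSet_eq_fun measurable_fst measurable_snd)]
  simp [Set.preimage]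

section IID

variable {Ω : Type*} [MeasurableSpace Ω] {μ : Measure Ω} [IsProbabilityMeasure μ]
  {Y : ℕ → Ω → ℝ} {ν : Measure ℝ}

lemma map_pair_eq_prod (hY : iIndepFun Y μ) (hmeas : ∀ i, Measurable (Y i))
    (hlaw : ∀ i, μ.map (Y i) = ν) {i j : ℕ} (hij : i ≠ j) :
    μ.map (fun ω => (Y i ω, Y j ω)) = ν.prod ν := by
  rw [(indepFun_iff_map_prod_eq_prod_map_map (hmeas i).aemeasurable
    (hmeas j).aemeasurable).1 (hY.indepFun hij), hlaw, hlaw]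

lemma map_triple_eq_prod (hY : iIndepFun Y μ) (hmeas : ∀ i, Measurable (Y i))
    (hlaw : ∀ i, μ.map (Y i) = ν) {a b c : ℕ} (hab : a ≠ b) (hac : a ≠ c) (hbc : b ≠ c) :
    μ.map (fun ω => (Y a ω, Y b ω, Y c ω)) = ν.prod (ν.prod ν) := by
  have h := (hY.indepFun_prodMk hmeas b c a hab.symm hac.symm).symm
  rw [(indepFun_iff_map_prod_eq_prod_map_map (hmeas a).aemeasurable
    ((hmeas b).prodMk (hmeas c)).aemeasurable).1 h, hlaw, map_pair_eq_prod hY hmeas hlaw hbc]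

lemma integral_comp_pair_swap (hY : iIndepFun Y μ) (hmeas : ∀ i, Measurable (Y i))
    (hlaw : ∀ i, μ.map (Y i) = ν) {i j : ℕ} (hij : i ≠ j) {f : ℝ × ℝ → ℝ} (hf : Measurable f) :
    ∫ ω, f (Y i ω, Y j ω) ∂μ = ∫ ω, f (Y j ω, Y i ω) ∂μ := by
  rw [← integral_map ((hmeas i).prodMk (hmeas j)).aemeasurable hf.aestronglyMeasurable,
    ← integral_map ((hmeas j).prodMk (hmeas i)).aemeasurable hf.aestronglyMeasurable,
    map_pair_eq_prod hY hmeas hlaw hij, map_pair_eq_prod hY hmeas hlaw hij.symm]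

lemma integral_comp_triple_rotate (hY : iIndepFun Y μ) (hmeas : ∀ i, Measurable (Y i))
    (hlaw : ∀ i, μ.map (Y i) = ν) {a b c : ℕ} (hab : a ≠ b) (hac : a ≠ c) (hbc : b ≠ c)
    {f : ℝ × ℝ × ℝ → ℝ} (hf : Measurable f) :
    ∫ ω, f (Y a ω, Y b ω, Y c ω) ∂μ = ∫ ω, f (Y b ω, Y c ω, Y a ω) ∂μ := by
  have hm : ∀ a b c, AEMeasurable (fun ω => (Y a ω, Y b ω, Y c ω)) μ := fun a b c =>
    ((hmeas a).prodMk ((hmeas b).prodMk (hmeas c))).aemeasurable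
  rw [← integral_map (hm a b c) hf.aestronglyMeasurable,
    ← integral_map (hm b c a) hf.aestronglyMeasurable,
    map_triple_eq_prod hY hmeas hlaw hab hac hbc,
    map_triple_eq_prod hY hmeas hlaw hbc hab.symm hac.symm]

lemma integral_sign_sub_eq_zero (hY : iIndepFun Y μ) (hmeas : ∀ i, Measurable (Y i))
    (hlaw : ∀ i, μ.map (Y i) = ν) {i j : ℕ} (hij : i ≠ j) :
    ∫ ω, Real.sign (Y i ω - Y j ω) ∂μ = 0 := by
  have h := integral_comp_pair_swap hY hmeas hlaw hij
    (f := fun p => Real.sign (p.1 - p.2)) (by fun_prop)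
  simp only [← neg_sub (Y i _), Real.sign_neg, integral_neg] at h
  linarith

lemma ae_ne_of_ne [NullSingletonClass ν] (hY : iIndepFun Y μ)
    (hmeas : ∀ i, Measurable (Y i)) (hlaw : ∀ i, μ.map (Y i) = ν) {i j : ℕ} (hij : i ≠ j) :
    ∀ᵐ ω ∂μ, Y i ω ≠ Y j ω := by
  have : IsProbabilityMeasure ν := hlaw 0 ▸ Measure.isProbabilityMeasure_map (hmeas 0).aemeasurable
  rw [ae_iff, ← prod_self_diagonal_eq_zero (ν := ν), ← map_pair_eq_prod hY hmeas hlaw hij,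
    Measure.map_apply ((hmeas i).prodMk (hmeas j))
      (measurableSet_eq_fun measurable_fst measurable_snd)]
  simp [Set.preimage]

lemma integral_sign_mul_sign_eq_third [NullSingletonClass ν] (hY : iIndepFun Y μ)
    (hmeas : ∀ i, Measurable (Y i)) (hlaw : ∀ i, μ.map (Y i) = ν) {a b c : ℕ}
    (hab : a ≠ b) (hac : a ≠ c) (hbc : b ≠ c) :
    ∫ ω, Real.sign (Y a ω - Y b ω) * Real.sign (Y a ω - Y c ω) ∂μ = 1 / 3 := by
  set g : ℝ × ℝ × ℝ → ℝ := fun p => Real.sign (p.1 - p.2.1) * Real.sign (p.1 - p.2.2)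
  have hg : Measurable g := by fun_prop
  have hint : ∀ a b c, Integrable (fun ω => g (Y a ω, Y b ω, Y c ω)) μ := fun a b c =>
    .of_bound (hg.comp ((hmeas a).prodMk ((hmeas b).prodMk (hmeas c)))).aestronglyMeasurable 1
      (ae_of_all _ fun ω => by
        simpa [g, abs_mul] using mul_le_one₀ (abs_real_sign_le_one _) (abs_nonneg _)
          (abs_real_sign_le_one _))
  have hsum : ∫ ω, g (Y a ω, Y b ω, Y c ω) + g (Y b ω, Y c ω, Y a ω)
      + g (Y c ω, Y a ω, Y b ω) ∂μ = 1 := by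
    rw [integral_congr_ae (g := fun _ => 1), integral_const, probReal_univ, one_smul]
    filter_upwards [ae_ne_of_ne hY hmeas hlaw hab, ae_ne_of_ne hY hmeas hlaw hac,
      ae_ne_of_ne hY hmeas hlaw hbc] with ω h₁ h₂ h₃
    exact sign_mul_sign_cyclic_sum_eq_one h₁ h₂ h₃
  have hint₂ : Integrable (fun ω => g (Y a ω, Y b ω, Y c ω) + g (Y b ω, Y c ω, Y a ω)) μ :=
    (hint a b c).add (hint b c a)
  rw [integral_add hint₂ (hint c a b),
    integral_add (hint a b c) (hint b c a)] at hsum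
  change ∫ ω, g (Y a ω, Y b ω, Y c ω) ∂μ = 1 / 3
  linarith [integral_comp_triple_rotate hY hmeas hlaw hab hac hbc hg,
    integral_comp_triple_rotate hY hmeas hlaw hbc hab.symm hac.symm hg]

end IID

lemma integral_sq_sum {Ω ι : Type*} [MeasurableSpace Ω] {μ : Measure Ω} (s : Finset ι)
    {f : ι → Ω → ℝ} (hf : ∀ a ∈ s, ∀ b ∈ s, Integrable (fun ω => f a ω * f b ω) μ) :
    ∫ ω, (∑ a ∈ s, f a ω) ^ 2 ∂μ = ∑ a ∈ s, ∑ b ∈ s, ∫ ω, f a ω * f b ω ∂μ := by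
  simp_rw [sq, sum_mul_sum]
  rw [integral_finsetSum _ fun a ha => integrable_finsetSum _ fun b hb => hf a ha b hb]
  exact sum_congr rfl fun a ha => integral_finsetSum _ fun b hb => hf a ha b hb

def pairs (n : ℕ) : Finset (ℕ × ℕ) := (range n ×ˢ range n).filter fun p => p.2 < p.1

lemma mem_pairs {n : ℕ} {p : ℕ × ℕ} : p ∈ pairs n ↔ p.2 < p.1 ∧ p.1 < n := by
  simp only [pairs, mem_filter, mem_product, mem_range]
  omega

lemma sum_pairs {M : Type*} [AddCommMonoid M] (n : ℕ) (f : ℕ × ℕ → M) :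
    ∑ p ∈ pairs n, f p = ∑ i ∈ range n, ∑ j ∈ range i, f (i, j) :=
  sum_finset_product _ _ _ fun p => by simp only [mem_pairs, mem_range]; tauto

lemma card_pairs (n : ℕ) : ((pairs n).card : ℝ) = n * (n - 1) / 2 := by
  rw [card_eq_sum_ones, Nat.cast_sum, sum_pairs]
  simp only [Nat.cast_one, sum_const, card_range, nsmul_eq_mul, mul_one]
  induction n with
  | zero => simp
  | succ n ih => rw [sum_range_succ, ih]; push_cast; ring

lemma sum_pairs_fst_eq {n c : ℕ} (hc : c < n) :
    ∑ p ∈ pairs n, (if p.1 = c then (1 : ℝ) else 0) = c := by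
  rw [sum_pairs, sum_eq_single_of_mem c (mem_range.2 hc) fun i _ hi =>
    sum_eq_zero fun _ _ => if_neg hi]
  simp

lemma sum_pairs_snd_eq {n c : ℕ} (hc : c < n) :
    ∑ p ∈ pairs n, (if p.2 = c then (1 : ℝ) else 0) = n - 1 - c := by
  have hIoo : {i ∈ range n | c < i} = Ioo c n := by ext; simp; omega
  rw [sum_pairs]
  simp only [sum_ite_eq', mem_range, sum_boole, hIoo, Nat.card_Ioo]
  rw [Nat.cast_sub (by omega), Nat.cast_sub (by omega)]
  push_cast
  ring

noncomputable def crossMoment (A B : ℝ) (p p' : ℕ × ℕ) : ℝ :=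
  if p' = p then A else if p'.1 = p.1 ∨ p'.1 = p.2 ∨ p'.2 = p.1 ∨ p'.2 = p.2 then B else 0

lemma crossMoment_eq_indicators (A B : ℝ) {p p' : ℕ × ℕ} (hp : p.2 < p.1) (hp' : p'.2 < p'.1) :
    crossMoment A B p p'
      = (A - 2 * B) * (if p' = p then 1 else 0)
        + B * ((if p'.1 = p.1 then 1 else 0) + (if p'.2 = p.1 then 1 else 0))
        + B * ((if p'.1 = p.2 then 1 else 0) + (if p'.2 = p.2 then 1 else 0)) := by
  obtain ⟨i, j⟩ := p
  obtain ⟨i', j'⟩ := p'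
  simp only [crossMoment, Prod.mk.injEq] at hp hp' ⊢
  split_ifs <;> first | omega | ring

lemma sum_crossMoment (A B : ℝ) {n : ℕ} {p : ℕ × ℕ} (hp : p ∈ pairs n) :
    ∑ p' ∈ pairs n, crossMoment A B p p' = A + (2 * n - 4) * B := by
  have ⟨hp₂, hp₁⟩ := mem_pairs.1 hp
  rw [sum_congr rfl fun p' hp' => crossMoment_eq_indicators A B hp₂ (mem_pairs.1 hp').1]
  simp only [sum_add_distrib, ← mul_sum, sum_ite_eq', hp, if_true, sum_pairs_fst_eq hp₁,
    sum_pairs_snd_eq hp₁, sum_pairs_fst_eq (hp₂.trans hp₁), sum_pairs_snd_eq (hp₂.trans hp₁)]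
  ring

section Cells

variable {Ω : Type*} {X R : ℕ → ℕ → Ω → ℝ}

def cell (X R : ℕ → ℕ → Ω → ℝ) (p : (ℕ × ℕ) × Bool) : Ω → ℝ :=
  if p.2 then R p.1.1 p.1.2 else X p.1.1 p.1.2

abbrev cellSigma (X R : ℕ → ℕ → Ω → ℝ) (S : Set ((ℕ × ℕ) × Bool)) : MeasurableSpace Ω :=
  ⨆ p ∈ S, MeasurableSpace.comap (cell X R p) inferInstance

lemma measurable_cell_cellSigma {S : Set ((ℕ × ℕ) × Bool)} {p : (ℕ × ℕ) × Bool} (h : p ∈ S) :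
    Measurable[cellSigma X R S] (cell X R p) :=
  Measurable.of_comap_le <|
    le_iSup₂ (f := fun p (_ : p ∈ S) => MeasurableSpace.comap (cell X R p) inferInstance) p h

lemma measurable_X_cellSigma (X R : ℕ → ℕ → Ω → ℝ) {S : Set ((ℕ × ℕ) × Bool)} {i k : ℕ}
    (h : ((i, k), false) ∈ S) :
    Measurable[cellSigma X R S] (X i k) :=
  measurable_cell_cellSigma h

lemma measurable_R_cellSigma (X R : ℕ → ℕ → Ω → ℝ) {S : Set ((ℕ × ℕ) × Bool)} {i k : ℕ}
    (h : ((i, k), true) ∈ S) :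
    Measurable[cellSigma X R S] (R i k) :=
  measurable_cell_cellSigma h

lemma measurable_fker_cellSigma {S : Set ((ℕ × ℕ) × Bool)} {m i j : ℕ}
    (hi : ∀ b, ((i, m), b) ∈ S) (hj : ∀ b, ((j, m), b) ∈ S) :
    Measurable[cellSigma X R S] (fker X R m i j) :=
  (measurable_real_sign.comp ((measurable_X_cellSigma X R (hi _)).sub
    (measurable_X_cellSigma X R (hj _)))).mul
    ((measurable_R_cellSigma X R (hi _)).mul (measurable_R_cellSigma X R (hj _)))

noncomputable def kendallTerm (X R : ℕ → ℕ → Ω → ℝ) (k l i j : ℕ) (ω : Ω) : ℝ :=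
  fker X R k i j ω * fker X R l i j ω

lemma fker_swap (m i j : ℕ) : fker X R m j i = -fker X R m i j := by
  ext ω
  simp only [fker, Pi.neg_apply, ← neg_sub (X i m ω), Real.sign_neg]
  ring

lemma kendallTerm_swap (k l i j : ℕ) : kendallTerm X R k l j i = kendallTerm X R k l i j := by
  ext ω
  simp only [kendallTerm, fker_swap (X := X) (R := R) _ i j, Pi.neg_apply, neg_mul_neg]

lemma tauP_eq_sum_pairs (X R : ℕ → ℕ → Ω → ℝ) (n k l : ℕ) (ω : Ω) :
    tauP X R n k l ω
      = 2 / ((n : ℝ) * ((n : ℝ) - 1)) * ∑ p ∈ pairs n, kendallTerm X R k l p.1 p.2 ω := by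
  simp only [tauP, sum_pairs, kendallTerm, fker]
  congr 1
  refine sum_congr rfl fun i _ => sum_congr rfl fun j _ => ?_
  ring

end Cells

namespace Setup

variable {Ω : Type*} [MeasurableSpace Ω] {μ : Measure Ω} {X R : ℕ → ℕ → Ω → ℝ} {q : ℕ → ℝ}

lemma measurable_cell (hs : Setup μ X R q) (p : (ℕ × ℕ) × Bool) : Measurable (cell X R p) := by
  rcases p with ⟨⟨i, k⟩, _ | _⟩
  exacts [hs.measX i k, hs.measR i k]

lemma integral_mul_eq_mul_integral_of_disjoint (hs : Setup μ X R q) {S T : Set ((ℕ × ℕ) × Bool)}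
    (hST : Disjoint S T) {f g : Ω → ℝ} (hf : Measurable[cellSigma X R S] f)
    (hg : Measurable[cellSigma X R T] g) :
    ∫ ω, f ω * g ω ∂μ = (∫ ω, f ω ∂μ) * ∫ ω, g ω ∂μ := by
  have hle : ∀ p, MeasurableSpace.comap (cell X R p) inferInstance ≤ ‹MeasurableSpace Ω› :=
    fun p => (hs.measurable_cell p).comap_le
  have hindep := indep_iSup_of_disjoint hle hs.indep hST
  have hfg : IndepFun f g μ := (IndepFun_iff_Indep f g μ).2 <|
    indep_of_indep_of_le_right (indep_of_indep_of_le_left hindep hf.comap_le) hg.comap_le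
  exact hfg.integral_mul_eq_mul_integral
    (hf.mono (iSup₂_le fun p _ => hle p) le_rfl).aestronglyMeasurable
    (hg.mono (iSup₂_le fun p _ => hle p) le_rfl).aestronglyMeasurable

lemma R_mul_self (hs : Setup μ X R q) (i k : ℕ) (ω : Ω) : R i k ω * R i k ω = R i k ω := by
  rcases hs.Rval i k ω with h | h <;> simp [h]

lemma integral_R (hs : Setup μ X R q) (i k : ℕ) : ∫ ω, R i k ω ∂μ = q k := by
  have : IsProbabilityMeasure μ := hs.isProb
  have hset : MeasurableSet {ω | R i k ω = 1} := hs.measR i k (measurableSet_singleton 1)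
  have hR : R i k = {ω | R i k ω = 1}.indicator 1 := by
    ext ω
    rcases hs.Rval i k ω with h | h <;> simp [h]
  rw [hR, integral_indicator_one hset, measureReal_def, hs.Rq,
    ENNReal.toReal_ofReal (hs.q_nonneg k)]

lemma integral_R_mul_R (hs : Setup μ X R q) {i j : ℕ} (m : ℕ) (hij : i ≠ j) :
    ∫ ω, R i m ω * R j m ω ∂μ = q m ^ 2 := by
  rw [hs.integral_mul_eq_mul_integral_of_disjoint (S := {((i, m), true)}) (T := {((j, m), true)})
    (by simpa using hij) (measurable_R_cellSigma X R (by simp))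
    (measurable_R_cellSigma X R (by simp)),
    hs.integral_R, hs.integral_R, sq]

lemma integral_R_mul_R_mul_R (hs : Setup μ X R q) {a b c : ℕ} (m : ℕ) (hab : a ≠ b)
    (hac : a ≠ c) (hbc : b ≠ c) :
    ∫ ω, R a m ω * R b m ω * R c m ω ∂μ = q m ^ 3 := by
  rw [hs.integral_mul_eq_mul_integral_of_disjoint (S := {((a, m), true), ((b, m), true)})
    (T := {((c, m), true)}) (f := fun ω => R a m ω * R b m ω) (by simp [hac.symm, hbc.symm])
    ((measurable_R_cellSigma X R (by simp)).mul (measurable_R_cellSigma X R (by simp)))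
    (measurable_R_cellSigma X R (by simp)), hs.integral_R_mul_R m hab, hs.integral_R]
  ring

lemma iIndepFun_column (hs : Setup μ X R q) (k : ℕ) : iIndepFun (fun i => X i k) μ :=
  hs.indep.precomp (g := fun i => ((i, k), false)) fun a b h => by simpa using h

lemma nullSingletonClass_law (hs : Setup μ X R q) (k : ℕ) :
    NullSingletonClass (μ.map (X 0 k)) :=
  ⟨fun x => by
    rw [Measure.map_apply (hs.measX 0 k) (measurableSet_singleton x)]
    exact hs.contX 0 k x⟩

lemma integral_fker (hs : Setup μ X R q) {i j : ℕ} (m : ℕ) (hij : i ≠ j) :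
    ∫ ω, fker X R m i j ω ∂μ = 0 := by
  have : IsProbabilityMeasure μ := hs.isProb
  have hX : Measurable[cellSigma X R {p | p.2 = false}] fun ω => Real.sign (X i m ω - X j m ω) :=
    measurable_real_sign.comp ((measurable_X_cellSigma X R (by simp)).sub
      (measurable_X_cellSigma X R (by simp)))
  have hR : Measurable[cellSigma X R {p | p.2 = true}] fun ω => R i m ω * R j m ω :=
    (measurable_R_cellSigma X R (by simp)).mul (measurable_R_cellSigma X R (by simp))
  unfold fker
  rw [hs.integral_mul_eq_mul_integral_of_disjoint (by simp [Set.disjoint_left]) hX hR,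
    integral_sign_sub_eq_zero (hs.iIndepFun_column m) (hs.measX · m) (hs.identX · m) hij, zero_mul]

lemma integral_fker_mul_self (hs : Setup μ X R q) {i j : ℕ} (m : ℕ) (hij : i ≠ j) :
    ∫ ω, fker X R m i j ω * fker X R m i j ω ∂μ = q m ^ 2 := by
  have : IsProbabilityMeasure μ := hs.isProb
  have := hs.nullSingletonClass_law m
  rw [← hs.integral_R_mul_R m hij]
  refine integral_congr_ae ?_
  filter_upwards [ae_ne_of_ne (hs.iIndepFun_column m) (hs.measX · m) (hs.identX · m) hij]
    with ω hne
  have hsign : Real.sign (X i m ω - X j m ω) ^ 2 = 1 := by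
    rcases Real.sign_apply_eq_of_ne_zero _ (sub_ne_zero.2 hne) with h | h <;> simp [h]
  calc fker X R m i j ω * fker X R m i j ω
      = Real.sign (X i m ω - X j m ω) ^ 2 * (R i m ω * R i m ω) * (R j m ω * R j m ω) := by
        rw [fker]; ring
    _ = R i m ω * R j m ω := by rw [hsign, hs.R_mul_self, hs.R_mul_self, one_mul]

lemma integral_fker_mul_fker_of_fst_eq (hs : Setup μ X R q) {i j j' : ℕ} (m : ℕ) (hij : i ≠ j)
    (hij' : i ≠ j') (hjj' : j ≠ j') :
    ∫ ω, fker X R m i j ω * fker X R m i j' ω ∂μ = q m ^ 3 / 3 := by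
  have : IsProbabilityMeasure μ := hs.isProb
  have := hs.nullSingletonClass_law m
  have hsplit : ∀ ω, fker X R m i j ω * fker X R m i j' ω
      = Real.sign (X i m ω - X j m ω) * Real.sign (X i m ω - X j' m ω)
        * (R i m ω * R j m ω * R j' m ω) := fun ω => by
    unfold fker
    linear_combination Real.sign (X i m ω - X j m ω) * Real.sign (X i m ω - X j' m ω)
      * R j m ω * R j' m ω * hs.R_mul_self i m ω
  have hX : Measurable[cellSigma X R {p | p.2 = false}] fun ω =>
      Real.sign (X i m ω - X j m ω) * Real.sign (X i m ω - X j' m ω) :=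
    (measurable_real_sign.comp ((measurable_X_cellSigma X R (by simp)).sub
      (measurable_X_cellSigma X R (by simp)))).mul (measurable_real_sign.comp
      ((measurable_X_cellSigma X R (by simp)).sub (measurable_X_cellSigma X R (by simp))))
  have hR : Measurable[cellSigma X R {p | p.2 = true}] fun ω =>
      R i m ω * R j m ω * R j' m ω :=
    ((measurable_R_cellSigma X R (by simp)).mul (measurable_R_cellSigma X R (by simp))).mul
      (measurable_R_cellSigma X R (by simp))
  rw [integral_congr_ae (ae_of_all _ hsplit),
    hs.integral_mul_eq_mul_integral_of_disjoint (by simp [Set.disjoint_left]) hX hR,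
    integral_sign_mul_sign_eq_third (hs.iIndepFun_column m) (hs.measX · m) (hs.identX · m)
      hij hij' hjj', hs.integral_R_mul_R_mul_R m hij hij' hjj']
  ring

lemma abs_fker_le_one (hs : Setup μ X R q) (m i j : ℕ) (ω : Ω) : |fker X R m i j ω| ≤ 1 := by
  have hR : ∀ i, |R i m ω| ≤ 1 := fun i => by rcases hs.Rval i m ω with h | h <;> simp [h]
  rw [fker, abs_mul, abs_mul]
  exact mul_le_one₀ (abs_real_sign_le_one _) (by positivity)
    (mul_le_one₀ (hR i) (abs_nonneg _) (hR j))

lemma measurable_fker (hs : Setup μ X R q) (m i j : ℕ) : Measurable (fker X R m i j) :=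
  (measurable_real_sign.comp ((hs.measX i m).sub (hs.measX j m))).mul
    ((hs.measR i m).mul (hs.measR j m))

lemma integrable_kendallTerm_mul (hs : Setup μ X R q) (k l i j i' j' : ℕ) :
    Integrable (fun ω => kendallTerm X R k l i j ω * kendallTerm X R k l i' j' ω) μ := by
  have : IsProbabilityMeasure μ := hs.isProb
  refine .of_bound (((hs.measurable_fker k i j).mul (hs.measurable_fker l i j)).mul
    ((hs.measurable_fker k i' j').mul (hs.measurable_fker l i' j'))).aestronglyMeasurable 1
    (ae_of_all _ fun ω => ?_)
  have h := fun m i j => hs.abs_fker_le_one m i j ω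
  simp only [kendallTerm, Real.norm_eq_abs, abs_mul]
  exact mul_le_one₀ (mul_le_one₀ (h _ _ _) (abs_nonneg _) (h _ _ _)) (by positivity)
    (mul_le_one₀ (h _ _ _) (abs_nonneg _) (h _ _ _))

lemma integral_kendallTerm_mul (hs : Setup μ X R q) {k l : ℕ} (hkl : k ≠ l) (i j i' j' : ℕ) :
    ∫ ω, kendallTerm X R k l i j ω * kendallTerm X R k l i' j' ω ∂μ
      = (∫ ω, fker X R k i j ω * fker X R k i' j' ω ∂μ)
        * ∫ ω, fker X R l i j ω * fker X R l i' j' ω ∂μ := by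
  have hsplit : ∀ ω, kendallTerm X R k l i j ω * kendallTerm X R k l i' j' ω
      = fker X R k i j ω * fker X R k i' j' ω * (fker X R l i j ω * fker X R l i' j' ω) :=
    fun ω => by simp only [kendallTerm]; ring
  have hcol : ∀ m, Measurable[cellSigma X R {p | p.1.2 = m}]
      fun ω => fker X R m i j ω * fker X R m i' j' ω := fun m =>
    (measurable_fker_cellSigma (by simp) (by simp)).mul
      (measurable_fker_cellSigma (by simp) (by simp))
  rw [integral_congr_ae (ae_of_all _ hsplit)]
  exact hs.integral_mul_eq_mul_integral_of_disjoint
    (Set.disjoint_left.2 fun p hk hl => hkl (hk.symm.trans hl)) (hcol k) (hcol l)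

lemma integral_kendallTerm_mul_self (hs : Setup μ X R q) {k l i j : ℕ} (hkl : k ≠ l)
    (hij : i ≠ j) :
    ∫ ω, kendallTerm X R k l i j ω * kendallTerm X R k l i j ω ∂μ = q k ^ 2 * q l ^ 2 := by
  rw [hs.integral_kendallTerm_mul hkl, hs.integral_fker_mul_self k hij,
    hs.integral_fker_mul_self l hij]

lemma integral_kendallTerm_mul_of_fst_eq (hs : Setup μ X R q) {k l i j j' : ℕ} (hkl : k ≠ l)
    (hij : i ≠ j) (hij' : i ≠ j') (hjj' : j ≠ j') :
    ∫ ω, kendallTerm X R k l i j ω * kendallTerm X R k l i j' ω ∂μ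
      = q k ^ 3 * q l ^ 3 / 9 := by
  rw [hs.integral_kendallTerm_mul hkl, hs.integral_fker_mul_fker_of_fst_eq k hij hij' hjj',
    hs.integral_fker_mul_fker_of_fst_eq l hij hij' hjj']
  ring

lemma integral_kendallTerm (hs : Setup μ X R q) {k l i j : ℕ} (hkl : k ≠ l) (hij : i ≠ j) :
    ∫ ω, kendallTerm X R k l i j ω ∂μ = 0 := by
  unfold kendallTerm
  rw [hs.integral_mul_eq_mul_integral_of_disjoint (S := {p | p.1.2 = k})
    (T := {p | p.1.2 = l}) (Set.disjoint_left.2 fun p hk hl => hkl (hk.symm.trans hl))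
    (measurable_fker_cellSigma (by simp) (by simp)) (measurable_fker_cellSigma (by simp) (by simp)),
    hs.integral_fker k hij, zero_mul]

lemma integral_kendallTerm_mul_of_disjoint (hs : Setup μ X R q) {k l i j i' j' : ℕ}
    (hkl : k ≠ l) (hij : i ≠ j) (hi' : i' ≠ i ∧ i' ≠ j) (hj' : j' ≠ i ∧ j' ≠ j) :
    ∫ ω, kendallTerm X R k l i j ω * kendallTerm X R k l i' j' ω ∂μ = 0 := by
  have hrows : ∀ a b, Measurable[cellSigma X R {p | p.1.1 = a ∨ p.1.1 = b}]
      (kendallTerm X R k l a b) := fun a b =>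
    (measurable_fker_cellSigma (by simp) (by simp)).mul
      (measurable_fker_cellSigma (by simp) (by simp))
  rw [hs.integral_mul_eq_mul_integral_of_disjoint ?_ (hrows i j) (hrows i' j'),
    hs.integral_kendallTerm hkl hij, zero_mul]
  rw [Set.disjoint_left]
  rintro ⟨⟨a, _⟩, _⟩ (rfl | rfl) (h | h) <;> simp_all

lemma integral_kendallTerm_mul_kendallTerm (hs : Setup μ X R q) {k l : ℕ} (hkl : k ≠ l)
    {p p' : ℕ × ℕ} (hp : p.2 < p.1) (hp' : p'.2 < p'.1) :
    ∫ ω, kendallTerm X R k l p.1 p.2 ω * kendallTerm X R k l p'.1 p'.2 ω ∂μ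
      = crossMoment (q k ^ 2 * q l ^ 2) (q k ^ 3 * q l ^ 3 / 9) p p' := by
  obtain ⟨i, j⟩ := p
  obtain ⟨i', j'⟩ := p'
  dsimp only at hp hp' ⊢
  by_cases hsame : (i', j') = (i, j)
  · obtain ⟨rfl, rfl⟩ := Prod.mk.inj hsame
    rw [crossMoment, if_pos rfl, hs.integral_kendallTerm_mul_self hkl hp.ne']
  rw [crossMoment, if_neg hsame]
  simp only [Prod.mk.injEq, not_and] at hsame
  by_cases hshare : i' = i ∨ i' = j ∨ j' = i ∨ j' = j
  · rw [if_pos hshare]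
    -- `kendallTerm` is symmetric in `i, j`, so every overlap reduces to a shared first index.
    rcases hshare with h | h | h | h <;> subst h
    · exact hs.integral_kendallTerm_mul_of_fst_eq hkl hp.ne' hp'.ne' (Ne.symm (hsame rfl))
    · rw [kendallTerm_swap k l i']
      exact hs.integral_kendallTerm_mul_of_fst_eq hkl hp.ne hp'.ne' (by omega)
    · rw [kendallTerm_swap k l j' i']
      exact hs.integral_kendallTerm_mul_of_fst_eq hkl hp.ne' (by omega) (by omega)
    · rw [kendallTerm_swap k l j' i, kendallTerm_swap k l j' i']
      exact hs.integral_kendallTerm_mul_of_fst_eq hkl hp.ne hp'.ne (by omega)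
  · rw [if_neg hshare]
    simp only [not_or] at hshare
    exact hs.integral_kendallTerm_mul_of_disjoint hkl hp.ne' ⟨hshare.1, hshare.2.1⟩
      ⟨hshare.2.2.1, hshare.2.2.2⟩

end Setup

/-- Under `H₀` and MCAR, for each pair `k ≠ l`,
`E(τ̃_kl²) = (4/(n(n-1))) q_k² q_l² ((n-2) q_k q_l / 9 + 1/2)`. -/
theorem expectation_tauP_sq {Ω : Type*} [MeasurableSpace Ω] (μ : Measure Ω)
    (X R : ℕ → ℕ → Ω → ℝ) (q : ℕ → ℝ) (hs : Setup μ X R q)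
    (n k l : ℕ) (hkl : k ≠ l) :
    ∫ ω, (tauP X R n k l ω) ^ 2 ∂μ
      = 4 / ((n : ℝ) * ((n : ℝ) - 1)) * (q k) ^ 2 * (q l) ^ 2
          * (((n : ℝ) - 2) * q k * q l / 9 + 1 / 2) := by
  have hrow : ∀ p ∈ pairs n, ∑ p' ∈ pairs n,
      ∫ ω, kendallTerm X R k l p.1 p.2 ω * kendallTerm X R k l p'.1 p'.2 ω ∂μ
        = q k ^ 2 * q l ^ 2 + (2 * n - 4) * (q k ^ 3 * q l ^ 3 / 9) := fun p hp => by
    rw [sum_congr rfl fun p' hp' => hs.integral_kendallTerm_mul_kendallTerm hkl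
      (mem_pairs.1 hp).1 (mem_pairs.1 hp').1, sum_crossMoment _ _ hp]
  simp_rw [tauP_eq_sum_pairs, mul_pow]
  rw [integral_const_mul,
    integral_sq_sum _ fun p _ p' _ => hs.integrable_kendallTerm_mul _ _ _ _ _ _,
    sum_congr rfl hrow, sum_const, nsmul_eq_mul, card_pairs]
  rcases eq_or_ne ((n : ℝ) * ((n : ℝ) - 1)) 0 with h | h
  · -- `n < 2`: both sides divide by `0`, so both are `0`.
    simp [h]
  · field_simp
    ring

end KendallMissing
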